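/- arXiv:2101.10843 — 2 statements merged into one kernel-verified Lean document; each statement's English description precedes it below -/
import Mathlib

section
/- The chain of ideals 0 ⊂ 𝔭_1 ⊂ 𝔭_2 ⊂ 𝔭_3 ⊂ 𝔭_4 ⊂ 𝔭_5 of S, where 𝔭_j is the ideal generated by σ, ᾱ_1, …, ᾱ_{3+j}, is strictly increasing: each inclusion is proper. -/
/-! Every generator of `S` is a monomial, so evaluating at the point that is `1` on the variables
dividing `ᾱ_m` and `0` elsewhere kills exactly those generators not supported inside `ᾱ_m`.
A finite check shows that no earlier `ᾱ_i`, and hence not `σ` either, is supported inside a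
later `ᾱ_m`; so for `m = 4 + j` this evaluation kills `𝔭_j` but not `ᾱ_m ∈ 𝔭_{j+1}`.
The bottom step holds because `σ ≠ 0`. -/

open MvPolynomial

noncomputable section

variable (k : Type*) [Field k]

/-- The polynomial ring in 12 variables `x₁..x₄, y₁..y₄, z₁..z₄`:
a variable is indexed by `(t, i)` with `t : Fin 3` (`0 ↦ x`, `1 ↦ y`, `2 ↦ z`)
and `i : Fin 4` the index modulo 4. -/
abbrev B := MvPolynomial (Fin 3 × Fin 4) k

/-- `x_i` (indices modulo 4). -/
def xv (i : ℕ) : B k := X (0, (Fin.ofNat 4 i))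
/-- `y_i` (indices modulo 4). -/
def yv (i : ℕ) : B k := X (1, (Fin.ofNat 4 i))
/-- `z_i` (indices modulo 4). -/
def zv (i : ℕ) : B k := X (2, (Fin.ofNat 4 i))

/-- `σ = x₁x₂x₃x₄ · y₁y₂y₃y₄ · z₁z₂z₃z₄`, the product of all 12 variables. -/
def sig : B k := ∏ p : Fin 3 × Fin 4, X p

/-- The substitution `x_i ↦ x_{i+1}, y_i ↦ y_{i+1}, z_i ↦ z_{i+1}` (indices mod 4). -/
def rot : B k →ₐ[k] B k := aeval (fun p => X (p.1, p.2 + 1))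

/-- `ᾱ₁ = x₂x₃²x₄ · y₁y₃y₄² · z₁z₂²z₃`. -/
def a1 : B k :=
  xv k 2 * xv k 3 ^ 2 * xv k 4 * yv k 1 * yv k 3 * yv k 4 ^ 2 * zv k 1 * zv k 2 ^ 2 * zv k 3

/-- `ᾱ₂ = (x₁x₄y₁y₄z₁z₄)²`. -/
def a2 : B k := (xv k 1 * xv k 4 * yv k 1 * yv k 4 * zv k 1 * zv k 4) ^ 2

/-- `ᾱ_j` for `j ≥ 1`: `ᾱ₁`, `ᾱ₂` are as above and `ᾱ_{j+2}` is obtained from `ᾱ_j`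
by applying the substitution `rot`. -/
def alpha (j : ℕ) : B k := (⇑(rot k))^[(j - 1) / 2] (if j % 2 = 1 then a1 k else a2 k)
/-- The cycle algebra `S = k[σ, ᾱ₁, …, ᾱ₈] ⊆ B`. -/
def Scal : Subalgebra k (B k) := Algebra.adjoin k (insert (sig k) (alpha k '' Set.Icc 1 8))
/-- Reduction of an index to `{1, …, 8}`, implementing "indices modulo 8". -/
def idx (j : ℕ) : ℕ := (j - 1) % 8 + 1

lemma idx_mem (j : ℕ) : idx j ∈ Set.Icc 1 8 :=
  ⟨Nat.le_add_left 1 _, Nat.succ_le_of_lt (Nat.mod_lt _ (by norm_num))⟩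

/-- `σ` as an element of `S`. -/
def σS : ↥(Scal k) := ⟨sig k, Algebra.subset_adjoin (Set.mem_insert _ _)⟩

/-- `ᾱ_j` (indices modulo 8) as an element of `S`. -/
def αS (j : ℕ) : ↥(Scal k) :=
  ⟨alpha k (idx j), Algebra.subset_adjoin (Set.mem_insert_of_mem _ ⟨idx j, idx_mem j, rfl⟩)⟩
/-- The ideal `𝔭_j = (σ, ᾱ₁, …, ᾱ_{3+j})` of `S`. -/
def pIdeal (j : ℕ) : Ideal ↥(Scal k) := Ideal.span (insert (σS k) (αS k '' Set.Icc 1 (3 + j)))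

section MonomialEval

variable {σ σ' R : Type*} [Fintype σ] [Fintype σ'] [CommSemiring R]

lemma eval_prod_X_pow_eq_zero_iff [NoZeroDivisors R] [Nontrivial R] (v : σ → R) (e : σ → ℕ) :
    eval v (∏ p, X p ^ e p : MvPolynomial σ R) = 0 ↔ ∃ p, e p ≠ 0 ∧ v p = 0 := by
  simp only [map_prod, map_pow, eval_X, Finset.prod_eq_zero_iff, Finset.mem_univ, true_and,
    pow_eq_zero_iff', and_comm]

lemma rename_prod_X_pow (τ : σ ≃ σ') (e : σ → ℕ) :
    rename τ (∏ p, X p ^ e p : MvPolynomial σ R) = ∏ p, X p ^ e (τ.symm p) := by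
  simp only [map_prod, map_pow, rename_X]
  exact Fintype.prod_equiv τ _ _ fun p => by rw [Equiv.symm_apply_apply]

end MonomialEval

/-- Rows are `x, y, z`; column `i` is the index `i` modulo 4, so the first column holds the
exponents of `x₄, y₄, z₄`. -/
def a1Exp (p : Fin 3 × Fin 4) : ℕ := ![![1, 0, 1, 2], ![2, 1, 0, 1], ![0, 1, 2, 1]] p.1 p.2

def a2Exp (p : Fin 3 × Fin 4) : ℕ := ![2, 2, 0, 0] p.2

def alphaExp (j : ℕ) (p : Fin 3 × Fin 4) : ℕ :=
  (if j % 2 = 1 then a1Exp else a2Exp) (p.1, p.2 - Fin.ofNat 4 ((j - 1) / 2))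

lemma a1_eq_prod : a1 k = ∏ p, X p ^ a1Exp p := by
  simp [a1, xv, yv, zv, a1Exp, Fintype.prod_prod_type, Fin.prod_univ_three, Fin.prod_univ_four,
    Fin.ofNat]
  ring

lemma a2_eq_prod : a2 k = ∏ p, X p ^ a2Exp p := by
  simp [a2, xv, yv, zv, a2Exp, Fintype.prod_prod_type, Fin.prod_univ_three, Fin.prod_univ_four,
    Fin.ofNat]
  ring

def rotIndex : Fin 3 × Fin 4 ≃ Fin 3 × Fin 4 := Equiv.prodCongr (Equiv.refl _) (Equiv.addRight 1)

lemma rot_eq_rename : rot k = rename rotIndex :=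
  algHom_ext fun p => by simp [rot, rotIndex, Prod.map]

lemma rot_iterate_prod_X_pow (e : Fin 3 × Fin 4 → ℕ) (n : ℕ) :
    (⇑(rot k))^[n] (∏ p, X p ^ e p) = ∏ p, X p ^ e (p.1, p.2 - Fin.ofNat 4 n) := by
  induction n with
  | zero => simp
  | succ n ih =>
    rw [Function.iterate_succ_apply', ih, rot_eq_rename, rename_prod_X_pow]
    refine Finset.prod_congr rfl fun p _ => ?_
    have : Fin.ofNat 4 (n + 1) = Fin.ofNat 4 n + 1 := by ext; simp [Fin.val_add]
    simp only [rotIndex, Equiv.prodCongr_symm, Equiv.prodCongr_apply, Equiv.addRight_symm,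
      Prod.map_snd, Equiv.coe_addRight, this]
    congr 3
    abel

lemma alpha_eq_prod (j : ℕ) : alpha k j = ∏ p, X p ^ alphaExp j p := by
  unfold alpha alphaExp
  split_ifs <;> simp only [a1_eq_prod, a2_eq_prod, rot_iterate_prod_X_pow]

lemma sig_eq_prod : sig k = ∏ p, X p ^ 1 := by
  simp [sig]

lemma exists_alphaExp_ne_zero_and_eq_zero {i m : ℕ} (hi : 1 ≤ i) (him : i < m) (hm : m ≤ 8) :
    ∃ p, alphaExp i p ≠ 0 ∧ alphaExp m p = 0 := by
  have key : ∀ m ∈ Finset.Icc 1 8, ∀ i ∈ Finset.Ico 1 m,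
      ∃ p, alphaExp i p ≠ 0 ∧ alphaExp m p = 0 := by
    decide
  exact key m (Finset.mem_Icc.2 ⟨by omega, hm⟩) i (Finset.mem_Ico.2 ⟨hi, him⟩)

lemma idx_of_mem {j : ℕ} (h1 : 1 ≤ j) (h8 : j ≤ 8) : idx j = j := by
  unfold idx
  omega

lemma σS_mem_pIdeal (j : ℕ) : σS k ∈ pIdeal k j :=
  Ideal.subset_span (Set.mem_insert _ _)

lemma αS_mem_pIdeal {j m : ℕ} (h1 : 1 ≤ m) (hm : m ≤ 3 + j) : αS k m ∈ pIdeal k j :=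
  Ideal.subset_span (Set.mem_insert_of_mem _ ⟨m, ⟨h1, hm⟩, rfl⟩)

lemma pIdeal_mono : Monotone (pIdeal k) := fun _ _ hij =>
  Ideal.span_mono <| Set.insert_subset_insert <|
    Set.image_mono <| Set.Icc_subset_Icc le_rfl (by omega)

lemma σS_ne_zero : σS k ≠ 0 := by
  intro h
  have := congrArg (fun s : Scal k => eval (fun _ => (1 : k)) (s : B k)) h
  simp [σS, sig] at this

lemma eval_eq_zero_of_mem_pIdeal {v : Fin 3 × Fin 4 → k} {j : ℕ} (hσ : eval v (sig k) = 0)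
    (hα : ∀ i ∈ Set.Icc 1 (3 + j), eval v (alpha k (idx i)) = 0) {s : Scal k}
    (hs : s ∈ pIdeal k j) : eval v (s : B k) = 0 := by
  have : pIdeal k j ≤ RingHom.ker ((eval v).comp (Scal k).val.toRingHom) := by
    refine Ideal.span_le.2 (Set.insert_subset hσ ?_)
    rintro _ ⟨i, hi, rfl⟩
    exact hα i hi
  exact this hs

lemma αS_notMem_pIdeal {j m : ℕ} (hjm : 3 + j < m) (hm : m ≤ 8) : αS k m ∉ pIdeal k j := by
  set v : Fin 3 × Fin 4 → k := fun p => if alphaExp m p = 0 then 0 else 1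
  have hv : ∀ p, v p = 0 ↔ alphaExp m p = 0 := fun p => by
    by_cases h : alphaExp m p = 0 <;> simp [v, h]
  have hvanish : ∀ i, 1 ≤ i → i < m → eval v (alpha k i) = 0 := fun i hi him => by
    obtain ⟨p, hip, hmp⟩ := exists_alphaExp_ne_zero_and_eq_zero hi him hm
    exact (alpha_eq_prod k i ▸ eval_prod_X_pow_eq_zero_iff v _).2 ⟨p, hip, (hv p).2 hmp⟩
  have hσ : eval v (sig k) = 0 := by
    obtain ⟨p, -, hmp⟩ := exists_alphaExp_ne_zero_and_eq_zero le_rfl (by omega : 1 < m) hm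
    rw [sig_eq_prod]
    exact (eval_prod_X_pow_eq_zero_iff v fun _ => 1).2 ⟨p, one_ne_zero, (hv p).2 hmp⟩
  intro hmem
  have h : eval v (alpha k (idx m)) = 0 := by
    refine eval_eq_zero_of_mem_pIdeal k hσ (fun i ⟨hi, hij⟩ => ?_) hmem
    rw [idx_of_mem hi (by omega)]
    exact hvanish i hi (by omega)
  rw [idx_of_mem (by omega) hm, alpha_eq_prod, eval_prod_X_pow_eq_zero_iff] at h
  obtain ⟨p, hp, hvp⟩ := h
  exact hp ((hv p).1 hvp)

lemma pIdeal_lt_succ {j : ℕ} (hj : j ≤ 4) : pIdeal k j < pIdeal k (j + 1) :=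
  lt_of_le_of_ne (pIdeal_mono k j.le_succ) fun h =>
    αS_notMem_pIdeal k (m := 4 + j) (by omega) (by omega) <|
      h ▸ αS_mem_pIdeal k (j := j + 1) (m := 4 + j) (by omega) (by omega)

/-- The chain `0 ⊂ 𝔭₁ ⊂ 𝔭₂ ⊂ 𝔭₃ ⊂ 𝔭₄ ⊂ 𝔭₅` of ideals of `S` is strictly increasing. -/
theorem stmt3 :
    (⊥ : Ideal ↥(Scal k)) < pIdeal k 1 ∧
      ∀ j ∈ Finset.Icc 1 4, pIdeal k j < pIdeal k (j + 1) :=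
  ⟨bot_lt_iff_ne_bot.2 fun h => σS_ne_zero k (by simpa [h] using σS_mem_pIdeal k 1),
    fun _ hj => pIdeal_lt_succ k (Finset.mem_Icc.1 hj).2⟩

end
end

section
/- For every integer n ≥ 1, the monomial ᾱ_1ⁿ does not lie in R. -/
open MvPolynomial

noncomputable section

variable (k : Type*) [Field k]

/-- The ideal `I = (σ², ᾱ_jᾱ_{j+1}ᾱ_{j+2} | j ∈ {1, …, 8})` of `S`, indices modulo 8. -/
def Ic : Ideal ↥(Scal k) :=
  Ideal.span (insert (σS k ^ 2)
    {p | ∃ j ∈ Finset.Icc 1 8, p = αS k j * αS k (j + 1) * αS k (j + 2)})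

/-- The subset `R = k[σ] + I` of `S`. -/
def Rset : Set ↥(Scal k) :=
  {r | ∃ p ∈ Algebra.adjoin k {σS k}, ∃ s ∈ Ic k, r = p + s}

/-! Send the variable `(t, i)` of `B` to `u ^ w * v`, with `w` read off `weightTable`, so that
a monomial goes to `u ^ a * v ^ b` with `b` its degree. Then `σ ↦ u¹² v¹²` and
`ᾱ_j ↦ u^{c_j} v¹²` with `c₁ = 18` and `c_j ≤ 14` for `j ≠ 1`: every generator of `S` lies in the
cone `2a ≤ 3b`, and `ᾱ₁` is the only one on its boundary. So `S` lands in the cone, `k[σ]` on the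
diagonal `a = b`, and `I` strictly inside the cone, since each of its generators contains `σ` or
some `ᾱ_j` with `j ≠ 1`. But `ᾱ₁ⁿ ↦ u^{18n} v^{12n}` is on the boundary and off the diagonal. -/

namespace MvPolynomial

open scoped Pointwise

variable {σ R : Type*} [CommSemiring R]

lemma mul_mem_restrictSupport {s t u : Set (σ →₀ ℕ)} (hstu : s + t ⊆ u)
    {p q : MvPolynomial σ R} (hp : p ∈ restrictSupport R s) (hq : q ∈ restrictSupport R t) :
    p * q ∈ restrictSupport R u :=
  restrictSupport_mono R hstu (restrictSupport_add R s t ▸ Submodule.mul_mem_mul hp hq)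

noncomputable def restrictSupportSubalgebra (M : AddSubmonoid (σ →₀ ℕ)) :
    Subalgebra R (MvPolynomial σ R) :=
  (restrictSupport R (M : Set (σ →₀ ℕ))).toSubalgebra
    (by rw [← C_1, C_apply]; exact (monomial_mem_restrictSupport R).2 (Or.inl M.zero_mem))
    (fun _ _ => mul_mem_restrictSupport (Set.add_subset_iff.2 fun _ ha _ hb => M.add_mem ha hb))

lemma map_mem_restrictSupport_of_mem_adjoin {A : Type*} [CommSemiring A] [Algebra R A]
    (f : A →ₐ[R] MvPolynomial σ R) (M : AddSubmonoid (σ →₀ ℕ)) {g : Set A}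
    (hg : ∀ x ∈ g, f x ∈ restrictSupport R (M : Set (σ →₀ ℕ))) {a : A}
    (ha : a ∈ Algebra.adjoin R g) : f a ∈ restrictSupport R (M : Set (σ →₀ ℕ)) :=
  Algebra.adjoin_le (S := (restrictSupportSubalgebra M).comap f) hg ha

lemma map_mem_restrictSupport_of_mem_span {A : Type*} [CommSemiring A]
    (f : A →+* MvPolynomial σ R) {M N : Set (σ →₀ ℕ)} (hMN : M + N ⊆ N)
    (hf : ∀ a, f a ∈ restrictSupport R M) {g : Set A} (hg : ∀ x ∈ g, f x ∈ restrictSupport R N)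
    {a : A} (ha : a ∈ Ideal.span g) : f a ∈ restrictSupport R N := by
  induction ha using Submodule.span_induction with
  | mem x hx => exact hg x hx
  | zero => simp
  | add x y _ _ hx hy => simpa using add_mem hx hy
  | smul b x _ hx => simpa using mul_mem_restrictSupport hMN (hf b) hx

lemma X_pow_mul_X_pow_mem_restrictSupport [Nontrivial R] {i j : σ} {a b : ℕ}
    {s : Set (σ →₀ ℕ)} :
    (X i ^ a * X j ^ b : MvPolynomial σ R) ∈ restrictSupport R s ↔
      Finsupp.single i a + Finsupp.single j b ∈ s := by
  simp [X_pow_eq_monomial]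

end MvPolynomial

open MvPolynomial

/-- Entry `(t, i)` is the weight of the variable `(t, i)`, i.e. of `x_i`, `y_i`, `z_i` for
`i` modulo 4: column `0` holds `x₄`, `y₄`, `z₄`. -/
def weightTable : Matrix (Fin 3) (Fin 4) ℕ := !![1, 0, 1, 2; 2, 1, 0, 1; 0, 1, 2, 1]

def weightMap : B k →ₐ[k] MvPolynomial (Fin 2) k :=
  aeval fun p => X 0 ^ weightTable p.1 p.2 * X 1

def alphaWeight (j : ℕ) : ℕ := ![18, 10, 12, 10, 6, 14, 12, 14] (Fin.ofNat 8 (j - 1))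

lemma weightMap_sig : weightMap k (sig k) = X 0 ^ 12 * X 1 ^ 12 := by
  simp only [weightMap, Fin.isValue, weightTable, Matrix.of_apply, Matrix.cons_val',
    Matrix.cons_val_fin_one, aeval_eq_bind₁, sig, Fintype.prod_prod_type, Fin.prod_univ_succ,
    Fin.succ_zero_eq_one, Fin.succ_one_eq_two, Finset.univ_unique, Fin.default_eq_zero,
    Finset.prod_singleton, Fin.reduceSucc, map_mul, bind₁_X_right, Matrix.cons_val_zero, pow_one,
    Matrix.cons_val_one, pow_zero, one_mul, Matrix.cons_val]
  ring

lemma weightMap_alpha {j : ℕ} (hj : j ∈ Set.Icc 1 8) :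
    weightMap k (alpha k j) = X 0 ^ alphaWeight j * X 1 ^ 12 := by
  obtain ⟨h1, h8⟩ := hj
  interval_cases j <;>
  · simp [alpha, a1, a2, rot, weightMap, xv, yv, zv, weightTable, alphaWeight, Fin.ofNat]
    ring

def slopeLE : AddSubmonoid (Fin 2 →₀ ℕ) where
  carrier := {e | 2 * e 0 ≤ 3 * e 1}
  add_mem' {e f} he hf := by simp only [Set.mem_ofPred_eq, Finsupp.add_apply] at *; omega
  zero_mem' := by simp

def slopeLT : Set (Fin 2 →₀ ℕ) := {e | 2 * e 0 < 3 * e 1}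

def diagonal : AddSubmonoid (Fin 2 →₀ ℕ) where
  carrier := {e | e 0 = e 1}
  add_mem' {e f} he hf := by simp only [Set.mem_ofPred_eq, Finsupp.add_apply] at *; omega
  zero_mem' := by simp

@[simp]
lemma mem_slopeLE {e : Fin 2 →₀ ℕ} : e ∈ slopeLE ↔ 2 * e 0 ≤ 3 * e 1 := Iff.rfl

@[simp]
lemma mem_slopeLT {e : Fin 2 →₀ ℕ} : e ∈ slopeLT ↔ 2 * e 0 < 3 * e 1 := Iff.rfl

@[simp]
lemma mem_diagonal {e : Fin 2 →₀ ℕ} : e ∈ diagonal ↔ e 0 = e 1 := Iff.rfl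

lemma slopeLT_subset_slopeLE : slopeLT ⊆ (slopeLE : Set (Fin 2 →₀ ℕ)) :=
  fun _ he => mem_slopeLE.2 (mem_slopeLT.1 he).le

open scoped Pointwise in
lemma slopeLE_add_slopeLT : (slopeLE : Set (Fin 2 →₀ ℕ)) + slopeLT ⊆ slopeLT := by
  rintro _ ⟨e, he, f, hf, rfl⟩
  simp only [SetLike.mem_coe, mem_slopeLE, mem_slopeLT, Finsupp.add_apply] at *
  omega

open scoped Pointwise in
lemma slopeLT_add_slopeLE : slopeLT + (slopeLE : Set (Fin 2 →₀ ℕ)) ⊆ slopeLT :=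
  add_comm (slopeLE : Set (Fin 2 →₀ ℕ)) slopeLT ▸ slopeLE_add_slopeLT

lemma weightMap_sig_mem_slopeLT : weightMap k (sig k) ∈ restrictSupport k slopeLT := by
  rw [weightMap_sig, X_pow_mul_X_pow_mem_restrictSupport]
  simp

lemma weightMap_alpha_mem_slopeLE {j : ℕ} (hj : j ∈ Set.Icc 1 8) :
    weightMap k (alpha k j) ∈ restrictSupport k (slopeLE : Set (Fin 2 →₀ ℕ)) := by
  rw [weightMap_alpha k hj, X_pow_mul_X_pow_mem_restrictSupport]
  simp only [SetLike.mem_coe, mem_slopeLE, Finsupp.add_apply, Finsupp.single_apply]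
  obtain ⟨h1, h8⟩ := hj
  interval_cases j <;> decide

lemma weightMap_alpha_mem_slopeLT {j : ℕ} (hj : j ∈ Set.Icc 2 8) :
    weightMap k (alpha k j) ∈ restrictSupport k slopeLT := by
  rw [weightMap_alpha k (Set.Icc_subset_Icc_left (by norm_num) hj),
    X_pow_mul_X_pow_mem_restrictSupport]
  simp only [mem_slopeLT, Finsupp.add_apply, Finsupp.single_apply]
  obtain ⟨h2, h8⟩ := hj
  interval_cases j <;> decide

lemma weightMap_mem_slopeLE (a : Scal k) :
    weightMap k a ∈ restrictSupport k (slopeLE : Set (Fin 2 →₀ ℕ)) := by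
  refine map_mem_restrictSupport_of_mem_adjoin (weightMap k) slopeLE ?_ a.2
  rintro _ (rfl | ⟨j, hj, rfl⟩)
  · exact restrictSupport_mono k slopeLT_subset_slopeLE (weightMap_sig_mem_slopeLT k)
  · exact weightMap_alpha_mem_slopeLE k hj

lemma weightMap_mem_diagonal {p : Scal k} (hp : p ∈ Algebra.adjoin k {σS k}) :
    weightMap k p ∈ restrictSupport k (diagonal : Set (Fin 2 →₀ ℕ)) := by
  refine map_mem_restrictSupport_of_mem_adjoin ((weightMap k).comp (Scal k).val) diagonal ?_ hp
  rintro _ rfl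
  simp [σS, weightMap_sig, X_pow_mul_X_pow_mem_restrictSupport]

lemma weightMap_alpha_idx_mul_mem_slopeLT {j : ℕ} (hj : 1 ≤ j) :
    weightMap k (alpha k (idx j) * alpha k (idx (j + 1)) * alpha k (idx (j + 2))) ∈
      restrictSupport k slopeLT := by
  have hLE (i : ℕ) := weightMap_alpha_mem_slopeLE k (idx_mem i)
  have hLT (i : ℕ) (hi : idx i ≠ 1) : weightMap k (alpha k (idx i)) ∈ restrictSupport k slopeLT :=
    weightMap_alpha_mem_slopeLT k ⟨by have := (idx_mem i).1; omega, (idx_mem i).2⟩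
  rw [map_mul, map_mul]
  refine mul_mem_restrictSupport slopeLT_add_slopeLE ?_ (hLE _)
  by_cases h : idx j = 1
  · rw [mul_comm]
    exact mul_mem_restrictSupport slopeLT_add_slopeLE (hLT (j + 1) (by grind [idx])) (hLE j)
  · exact mul_mem_restrictSupport slopeLT_add_slopeLE (hLT j h) (hLE _)

lemma weightMap_mem_slopeLT {s : Scal k} (hs : s ∈ Ic k) :
    weightMap k s ∈ restrictSupport k slopeLT := by
  refine map_mem_restrictSupport_of_mem_span ((weightMap k).comp (Scal k).val).toRingHom
    slopeLE_add_slopeLT (weightMap_mem_slopeLE k) ?_ hs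
  rintro _ (rfl | ⟨j, hj, rfl⟩) <;>
    simp only [AlgHom.toRingHom_eq_coe, RingHom.coe_coe, AlgHom.comp_apply, Subalgebra.coe_val,
      Subalgebra.coe_mul, map_pow]
  · rw [sq]
    exact mul_mem_restrictSupport slopeLE_add_slopeLT
      (restrictSupport_mono k slopeLT_subset_slopeLE (weightMap_sig_mem_slopeLT k))
      (weightMap_sig_mem_slopeLT k)
  · exact weightMap_alpha_idx_mul_mem_slopeLT k (Finset.mem_Icc.1 hj).1

lemma weightMap_mem_of_mem_Rset {r : Scal k} (hr : r ∈ Rset k) :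
    weightMap k r ∈ restrictSupport k ((diagonal : Set (Fin 2 →₀ ℕ)) ∪ slopeLT) := by
  obtain ⟨p, hp, s, hs, rfl⟩ := hr
  rw [Subalgebra.coe_add, map_add]
  exact add_mem (restrictSupport_mono k Set.subset_union_left (weightMap_mem_diagonal k hp))
    (restrictSupport_mono k Set.subset_union_right (weightMap_mem_slopeLT k hs))

/-- For every `n ≥ 1`, the monomial `ᾱ₁ⁿ` does not lie in `R = k[σ] + I`. -/
theorem stmt6 : ∀ n : ℕ, 1 ≤ n → αS k 1 ^ n ∉ Rset k := by
  intro n hn hR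
  have h := weightMap_mem_of_mem_Rset k hR
  rw [SubmonoidClass.coe_pow, map_pow, show (αS k 1 : B k) = alpha k 1 from rfl,
    weightMap_alpha k ⟨le_rfl, by norm_num⟩, show alphaWeight 1 = 18 from rfl, mul_pow,
    ← pow_mul, ← pow_mul, X_pow_mul_X_pow_mem_restrictSupport] at h
  simp only [Set.mem_union, SetLike.mem_coe, mem_diagonal, mem_slopeLT, Finsupp.add_apply,
    Finsupp.single_apply, Fin.isValue, zero_ne_one, one_ne_zero, if_true, if_false] at h
  omega

end
end
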